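/- Fix an odd prime p. Let T and U be pruned trees on ℕ such that the first levels T_1 = {s ∈ T : |s| = 1} and U_1 = {s ∈ U : |s| = 1} are infinite. Then the path spaces [T] and [U] are uniformly homeomorphic if and only if the topological groups G_T and G_U are topologically isomorphic (isomorphic as groups via a homeomorphism). -/

import Mathlib

open scoped Classical
open scoped commutatorElement

/-- A pruned tree on ℕ: a nonempty set of finite sequences of naturals, closed
under initial segments, in which every element has a proper extension. -/
def IsPrunedTree (T : Set (List ℕ)) : Prop :=
  T.Nonempty ∧ (∀ s ∈ T, ∀ t : List ℕ, t <+: s → t ∈ T) ∧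
    (∀ s ∈ T, ∃ t ∈ T, s <+: t ∧ s ≠ t)

/-- The path space `[T]` of a tree `T`. -/
def pathSpace (T : Set (List ℕ)) : Set (ℕ → ℕ) :=
  {x | ∀ n : ℕ, (List.ofFn fun i : Fin n => x i) ∈ T}

/-- The standard metric on sequences: `d(x,y) = 2^{-n}` where `n` is least with
`x n ≠ y n`, and `d(x,x) = 0`. -/
noncomputable def seqDist (x y : ℕ → ℕ) : ℝ :=
  if h : x = y then 0 else (2 : ℝ)⁻¹ ^ Nat.find (Function.ne_iff.mp h)

/-- Uniform continuity of a map between path spaces. -/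
def IsUnifCont {T S : Set (List ℕ)} (Φ : pathSpace T → pathSpace S) : Prop :=
  ∀ ε : ℝ, 0 < ε → ∃ δ : ℝ, 0 < δ ∧ ∀ x y : pathSpace T,
    seqDist x.1 y.1 < δ → seqDist (Φ x).1 (Φ y).1 < ε
/-- Two path spaces are uniformly homeomorphic iff there is a bijection between
them that is uniformly continuous in both directions. -/
def UnifHomeo (T S : Set (List ℕ)) : Prop :=
  ∃ Φ : pathSpace T ≃ pathSpace S, IsUnifCont (⇑Φ) ∧ IsUnifCont (⇑Φ.symm)

/-- The `n`-th level of a tree `T`: elements of `T` of length `n`. -/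
def level (T : Set (List ℕ)) (n : ℕ) : Set (List ℕ) := {s | s ∈ T ∧ s.length = n}

/-- The relators defining `L(X)`: `p`-th powers, triple commutators (making the
group nilpotent of class ≤ 2), and the commutators `[a_v, b_v]`. -/
def LRelators (p : ℕ) (X : Type*) : Set (FreeGroup (X ⊕ X)) :=
  {w | ∃ u : FreeGroup (X ⊕ X), w = u ^ p} ∪
    {w | ∃ u v t : FreeGroup (X ⊕ X), w = ⁅⁅u, v⁆, t⁆} ∪
    {w | ∃ v : X, w = ⁅FreeGroup.of (Sum.inl v : X ⊕ X), FreeGroup.of (Sum.inr v : X ⊕ X)⁆}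

/-- Mekler's group `L(X)`: the free 2-nilpotent group of exponent `p` on
generators `a_v, b_v` (`v ∈ X`), modulo the relations `[a_v, b_v] = 1`. -/
def LGroup (p : ℕ) (X : Type*) : Type _ :=
  FreeGroup (X ⊕ X) ⧸ Subgroup.normalClosure (LRelators p X)

instance (p : ℕ) (X : Type*) : Group (LGroup p X) :=
  inferInstanceAs (Group (FreeGroup (X ⊕ X) ⧸ Subgroup.normalClosure (LRelators p X)))

/-- The generator `a_v` of `L(X)`. -/
def aGen (p : ℕ) {X : Type*} (v : X) : LGroup p X :=
  QuotientGroup.mk (FreeGroup.of (Sum.inl v))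

/-- The generator `b_v` of `L(X)`. -/
def bGen (p : ℕ) {X : Type*} (v : X) : LGroup p X :=
  QuotientGroup.mk (FreeGroup.of (Sum.inr v))

/-- The epimorphism `q̂ : L(X) → L(Y)` induced by a map `q : X → Y`, sending
`a_v ↦ a_{q v}` and `b_v ↦ b_{q v}`. -/
def inducedHom (p : ℕ) {X Y : Type*} (q : X → Y) : LGroup p X →* LGroup p Y :=
  QuotientGroup.lift _
    ((QuotientGroup.mk' _).comp (FreeGroup.map (Sum.map q q)))
    (by
      have hnorm : ((Subgroup.normalClosure (LRelators p Y)).comap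
          (FreeGroup.map (Sum.map q q))).Normal :=
        Subgroup.Normal.comap Subgroup.normalClosure_normal _
      have hle : Subgroup.normalClosure (LRelators p X) ≤
          (Subgroup.normalClosure (LRelators p Y)).comap
            (FreeGroup.map (Sum.map q q)) := by
        apply Subgroup.normalClosure_le_normal
        intro w hw
        simp only [LRelators, Set.mem_union, Set.mem_setOf_eq] at hw
        rcases hw with ((⟨u, rfl⟩ | ⟨u, v, t, rfl⟩) | ⟨v, rfl⟩)
        · refine Subgroup.mem_comap.mpr (Subgroup.subset_normalClosure ?_)
          exact Or.inl (Or.inl ⟨FreeGroup.map (Sum.map q q) u, by rw [map_pow]⟩)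
        · refine Subgroup.mem_comap.mpr (Subgroup.subset_normalClosure ?_)
          exact Or.inl (Or.inr ⟨_, _, _, by
            rw [map_commutatorElement, map_commutatorElement]⟩)
        · refine Subgroup.mem_comap.mpr (Subgroup.subset_normalClosure ?_)
          refine Or.inr ⟨q v, ?_⟩
          rw [map_commutatorElement, FreeGroup.map.of, FreeGroup.map.of]
          rfl
      intro w hw
      have hmem : FreeGroup.map (Sum.map q q) w ∈
          Subgroup.normalClosure (LRelators p Y) :=
        Subgroup.mem_comap.mp (hle hw)
      show QuotientGroup.mk' _ (FreeGroup.map (Sum.map q q) w) = 1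
      exact (QuotientGroup.eq_one_iff _).mpr hmem)

instance (p : ℕ) (X : Type*) : TopologicalSpace (LGroup p X) := ⊥

instance (p : ℕ) (X : Type*) : DiscreteTopology (LGroup p X) := ⟨rfl⟩

/-- The predecessor map from the `(n+1)`-st level of a pruned tree to its
`n`-th level. -/
def levelPred (T : Set (List ℕ)) (hT : IsPrunedTree T) (n : ℕ) :
    level T (n + 1) → level T n :=
  fun s => ⟨(s : List ℕ).take n,
    hT.2.1 s.1 s.2.1 _ (List.take_prefix n s.1),
    by rw [List.length_take, s.2.2]; omega⟩

/-- The group `G_T`: the inverse limit of the groups `L(T_n)` (`n ≥ 1`) along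
the epimorphisms induced by the predecessor maps, as a (closed) subgroup of the
product `∏_{n≥1} L(T_n)` (each factor discrete, product topology). -/
def GT (p : ℕ) (T : Set (List ℕ)) (hT : IsPrunedTree T) :
    Subgroup (∀ n : ℕ, LGroup p (level T (n + 1))) where
  carrier := {g | ∀ n : ℕ,
    inducedHom p (levelPred T hT (n + 1)) (g (n + 1)) = g n}
  one_mem' := fun n => by simp
  mul_mem' := fun {a b} ha hb n => by
    simp only [Pi.mul_apply, map_mul, ha n, hb n]
  inv_mem' := fun {a} ha n => by
    simp only [Pi.inv_apply, map_inv, ha n]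

/-- Two topological groups are topologically isomorphic if there is a group
isomorphism between them that is a homeomorphism. -/
def TopIsoGrp (G H : Type*) [Group G] [Group H] [TopologicalSpace G]
    [TopologicalSpace H] : Prop :=
  ∃ e : G ≃* H, Continuous ⇑e ∧ Continuous ⇑e.symm

/-! ### Auxiliary development -/

noncomputable section MK

namespace MK

open List

/-- restriction of a sequence to a finite list -/
def res (x : ℕ → ℕ) (n : ℕ) : List ℕ := List.ofFn fun i : Fin n => x i

@[simp] lemma length_res (x : ℕ → ℕ) (n : ℕ) : (res x n).length = n := by
  simp [res]

lemma res_getElem (x : ℕ → ℕ) {n i : ℕ} (h : i < n) :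
    (res x n)[i]'(by simpa using h) = x i := by
  simp [res]

lemma take_res (x : ℕ → ℕ) {m n : ℕ} (h : m ≤ n) : (res x n).take m = res x m := by
  apply List.ext_getElem
  · simp [h]
  · intro i h1 h2
    simp [res]

lemma res_eq_iff {x y : ℕ → ℕ} {n : ℕ} : res x n = res y n ↔ ∀ i < n, x i = y i := by
  rw [res, res, List.ofFn_inj, funext_iff]
  constructor
  · intro h i hi; exact h ⟨i, hi⟩
  · intro h i; exact h i i.2

lemma res_mem {T : Set (List ℕ)} (x : pathSpace T) (n : ℕ) : res x.1 n ∈ T := x.2 n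

lemma seqDist_le {x y : ℕ → ℕ} {n : ℕ} (h : res x n = res y n) :
    seqDist x y ≤ (2⁻¹ : ℝ) ^ n := by
  unfold seqDist
  split
  · positivity
  · next hne =>
    have hfind : n ≤ Nat.find (Function.ne_iff.mp hne) := by
      by_contra hlt
      push_neg at hlt
      exact Nat.find_spec (Function.ne_iff.mp hne) (res_eq_iff.mp h _ hlt)
    exact pow_le_pow_of_le_one (by norm_num) (by norm_num) hfind

lemma res_eq_of_lt {x y : ℕ → ℕ} {n : ℕ} (h : seqDist x y < (2⁻¹ : ℝ) ^ n) :
    res x n = res y n := by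
  unfold seqDist at h
  split at h
  · next he => subst he; rfl
  · next hne =>
    rw [res_eq_iff]
    intro i hi
    by_contra hxy
    have hf : Nat.find (Function.ne_iff.mp hne) ≤ i := Nat.find_le hxy
    have : (2⁻¹ : ℝ) ^ n ≤ 2⁻¹ ^ Nat.find (Function.ne_iff.mp hne) :=
      pow_le_pow_of_le_one (by norm_num) (by norm_num) (by omega)
    linarith

lemma exists_small {ε : ℝ} (hε : 0 < ε) : ∃ n : ℕ, (2⁻¹ : ℝ) ^ n < ε :=
  exists_pow_lt_of_lt_one hε (by norm_num)

lemma prefix_mono {c : ℕ → List ℕ} (hc : ∀ k, c k <+: c (k + 1)) :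
    ∀ {k k'}, k ≤ k' → c k <+: c k' := by
  intro k k' h
  induction h with
  | refl => exact List.prefix_refl _
  | step h ih => exact ih.trans (hc _)

lemma getD_eq_of_prefix {l l' : List ℕ} (h : l <+: l') {i : ℕ} (hi : i < l.length) :
    l.getD i 0 = l'.getD i 0 := by
  obtain ⟨t, rfl⟩ := h
  rw [List.getD_eq_getElem _ _ hi, List.getD_eq_getElem _ _ (by simp; omega)]
  exact (List.getElem_append_left hi).symm

lemma exists_path {T : Set (List ℕ)} (hT : IsPrunedTree T) (c : ℕ → List ℕ)
    (hmem : ∀ k, c k ∈ T) (hlen : ∀ k, k ≤ (c k).length)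
    (hchain : ∀ k, c k <+: c (k + 1)) :
    ∃ x : pathSpace T, ∀ n k, n ≤ (c k).length → res x.1 n = (c k).take n := by
  set xf : ℕ → ℕ := fun i => (c (i + 1)).getD i 0 with hxf
  have key : ∀ k i, i < (c k).length → (c k).getD i 0 = xf i := by
    intro k i hi
    rcases le_total k (i + 1) with h | h
    · exact getD_eq_of_prefix (prefix_mono hchain h) hi
    · exact (getD_eq_of_prefix (prefix_mono hchain h) (by have := hlen (i + 1); omega)).symm
  have hres : ∀ n k, n ≤ (c k).length → res xf n = (c k).take n := by
    intro n k h
    apply List.ext_getElem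
    · simp [h]
    · intro i h1 h2
      rw [res_getElem xf (by simpa using h1), List.getElem_take]
      rw [← List.getD_eq_getElem _ 0 (by simp at h2; omega)]
      exact (key k i (by simp at h2; omega)).symm
  refine ⟨⟨xf, ?_⟩, hres⟩
  intro n
  have h1 : (List.ofFn fun i : Fin n => xf i) = res xf n := rfl
  rw [h1, hres n n (hlen n)]
  exact hT.2.1 _ (hmem n) _ (List.take_prefix _ _)

lemma exists_succ {T : Set (List ℕ)} (hT : IsPrunedTree T) {s : List ℕ} (hs : s ∈ T) :
    ∃ t ∈ T, s <+: t ∧ t.length = s.length + 1 := by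
  obtain ⟨t, ht, hpre, hne⟩ := hT.2.2 s hs
  have hlt : s.length < t.length := by
    rcases lt_or_eq_of_le hpre.length_le with h | h
    · exact h
    · exact absurd (hpre.eq_of_length h) hne
  refine ⟨t.take (s.length + 1), hT.2.1 t ht _ (List.take_prefix _ _), ?_, by
    rw [List.length_take]; omega⟩
  rw [List.prefix_take_iff]
  exact ⟨hpre, by omega⟩

/-- Levels (shifted by one): `Lv T n` is the set of nodes of length `n+1`. -/
abbrev Lv (T : Set (List ℕ)) (n : ℕ) := ↥(level T (n + 1))

def resNode {T : Set (List ℕ)} (x : pathSpace T) (n : ℕ) : Lv T n :=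
  ⟨res x.1 (n + 1), x.2 (n + 1), length_res _ _⟩

def takeNode {T : Set (List ℕ)} (hT : IsPrunedTree T) {i j : ℕ} (h : i ≤ j) (s : Lv T j) :
    Lv T i :=
  ⟨s.1.take (i + 1), hT.2.1 s.1 s.2.1 _ (List.take_prefix _ _), by
    have := s.2.2; rw [List.length_take]; omega⟩

@[simp] lemma takeNode_resNode {T : Set (List ℕ)} (hT : IsPrunedTree T) {i j : ℕ}
    (h : i ≤ j) (x : pathSpace T) : takeNode hT h (resNode x j) = resNode x i :=
  Subtype.ext (by
    show (res x.1 (j + 1)).take (i + 1) = res x.1 (i + 1)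
    exact take_res x.1 (by omega))

lemma takeNode_comp {T : Set (List ℕ)} (hT : IsPrunedTree T) {i j k : ℕ}
    (hij : i ≤ j) (hjk : j ≤ k) :
    takeNode hT hij ∘ takeNode hT hjk = takeNode hT (hij.trans hjk) := by
  funext s
  apply Subtype.ext
  show (s.1.take (j + 1)).take (i + 1) = s.1.take (i + 1)
  rw [List.take_take, min_eq_left (by omega)]

lemma takeNode_id {T : Set (List ℕ)} (hT : IsPrunedTree T) {i : ℕ} :
    takeNode hT (le_refl i) = id := by
  funext s
  apply Subtype.ext
  show s.1.take (i + 1) = s.1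
  exact List.take_of_length_le (by rw [s.2.2])

lemma levelPred_eq_takeNode {T : Set (List ℕ)} (hT : IsPrunedTree T) (n : ℕ) :
    levelPred T hT (n + 1) = takeNode hT (Nat.le_succ n) := by
  funext s; exact Subtype.ext rfl

lemma path_ext {T : Set (List ℕ)} {x y : pathSpace T}
    (h : ∀ n, ∃ m, n ≤ m ∧ resNode x m = resNode y m) : x = y := by
  apply Subtype.ext; funext i
  obtain ⟨m, him, he⟩ := h i
  have h2 : res x.1 (m + 1) = res y.1 (m + 1) := congrArg Subtype.val he
  exact res_eq_iff.mp h2 i (by omega)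

lemma exists_path_through {T : Set (List ℕ)} (hT : IsPrunedTree T) {m : ℕ} (s : Lv T m) :
    ∃ x : pathSpace T, resNode x m = s := by
  let cc : ℕ → {l : List ℕ // l ∈ T} := fun k =>
    Nat.rec ⟨s.1, s.2.1⟩ (fun _ prev =>
      ⟨(exists_succ hT prev.2).choose, (exists_succ hT prev.2).choose_spec.1⟩) k
  have hchain : ∀ k, (cc k).1 <+: (cc (k + 1)).1 := fun k =>
    (exists_succ hT (cc k).2).choose_spec.2.1
  have hlen : ∀ k, (cc k).1.length = m + 1 + k := by
    intro k
    induction k with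
    | zero => exact s.2.2
    | succ k ih =>
      have := (exists_succ hT (cc k).2).choose_spec.2.2
      show (exists_succ hT (cc k).2).choose.length = m + 1 + (k + 1)
      omega
  obtain ⟨x, hx⟩ := exists_path hT (fun k => (cc k).1) (fun k => (cc k).2)
    (fun k => by rw [hlen k]; omega) hchain
  refine ⟨x, Subtype.ext ?_⟩
  have := hx (m + 1) 0 (by rw [hlen 0])
  rw [show (resNode x m).1 = res x.1 (m + 1) from rfl, this]
  show (cc 0).1.take (m + 1) = s.1
  exact List.take_of_length_le (by rw [hlen 0])

def nodePath {T : Set (List ℕ)} (hT : IsPrunedTree T) {m : ℕ} (s : Lv T m) : pathSpace T :=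
  (exists_path_through hT s).choose

@[simp] lemma nodePath_spec {T : Set (List ℕ)} (hT : IsPrunedTree T) {m : ℕ} (s : Lv T m) :
    resNode (nodePath hT s) m = s :=
  (exists_path_through hT s).choose_spec

/-! ### Generalities on the groups `L(X)` -/

section LG

variable (p : ℕ) {X Y Z W : Type*}

/-- The quotient map as a `MonoidHom`. -/
def lmkHom (X : Type*) : FreeGroup (X ⊕ X) →* LGroup p X :=
  QuotientGroup.mk' (Subgroup.normalClosure (LRelators p X))

lemma lmk_surjective :
    Function.Surjective (QuotientGroup.mk :
      FreeGroup (X ⊕ X) → LGroup p X) :=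
  QuotientGroup.mk'_surjective _

lemma lhom_ext {G : Type*} [Group G] {φ ψ : LGroup p X →* G}
    (ha : ∀ v, φ (aGen p v) = ψ (aGen p v))
    (hb : ∀ v, φ (bGen p v) = ψ (bGen p v)) : φ = ψ := by
  apply QuotientGroup.monoidHom_ext
  apply FreeGroup.ext_hom
  rintro (v | v)
  · exact ha v
  · exact hb v

lemma lind {C : LGroup p X → Prop} (z : LGroup p X) (h1 : C 1)
    (ha : ∀ v, C (aGen p v)) (hb : ∀ v, C (bGen p v))
    (hinv : ∀ g, C g → C g⁻¹) (hmul : ∀ g h, C g → C h → C (g * h)) : C z := by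
  obtain ⟨w, rfl⟩ := lmk_surjective p z
  induction w using FreeGroup.induction_on with
  | C1 => exact h1
  | of x =>
    rcases x with v | v
    · exact ha v
    · exact hb v
  | inv_of x hx =>
    have : ((FreeGroup.of x)⁻¹ : FreeGroup (X ⊕ X)) = (FreeGroup.of x)⁻¹ := rfl
    show C ((QuotientGroup.mk (FreeGroup.of x) : LGroup p X)⁻¹)
    exact hinv _ hx
  | mul x y hx hy =>
    show C ((QuotientGroup.mk x : LGroup p X) * QuotientGroup.mk y)
    exact hmul _ _ hx hy

/-- Lift a family of elements of `G` satisfying the relations to a hom `L(X) →* G`. -/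
def llift {G : Type*} [Group G] (F : (X ⊕ X) → G)
    (hexp : ∀ g : G, g ^ p = 1)
    (hnil : ∀ g h k : G, ⁅⁅g, h⁆, k⁆ = 1)
    (hedge : ∀ v : X, ⁅F (Sum.inl v), F (Sum.inr v)⁆ = 1) : LGroup p X →* G :=
  QuotientGroup.lift _ (FreeGroup.lift F) (by
    have hle : Subgroup.normalClosure (LRelators p X) ≤ (FreeGroup.lift F).ker := by
      apply Subgroup.normalClosure_le_normal
      intro w hw
      rcases hw with (⟨u, rfl⟩ | ⟨u, v, t, rfl⟩) | ⟨v, rfl⟩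
      · simp only [SetLike.mem_coe, MonoidHom.mem_ker, map_pow]; exact hexp _
      · simp only [SetLike.mem_coe, MonoidHom.mem_ker, map_commutatorElement]; exact hnil _ _ _
      · simp only [SetLike.mem_coe, MonoidHom.mem_ker, map_commutatorElement,
          FreeGroup.lift_apply_of]; exact hedge v
    intro w hw
    exact MonoidHom.mem_ker.mp (hle hw))

@[simp] lemma llift_aGen {G : Type*} [Group G] (F : (X ⊕ X) → G) (hexp) (hnil) (hedge)
    (v : X) : llift p F hexp hnil hedge (aGen p v) = F (Sum.inl v) := by
  show QuotientGroup.lift _ _ _ (QuotientGroup.mk _) = _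
  erw [QuotientGroup.lift_mk']
  exact FreeGroup.lift_apply_of

@[simp] lemma llift_bGen {G : Type*} [Group G] (F : (X ⊕ X) → G) (hexp) (hnil) (hedge)
    (v : X) : llift p F hexp hnil hedge (bGen p v) = F (Sum.inr v) := by
  show QuotientGroup.lift _ _ _ (QuotientGroup.mk _) = _
  erw [QuotientGroup.lift_mk']
  exact FreeGroup.lift_apply_of

@[simp] lemma inducedHom_aGen (q : X → Y) (v : X) :
    inducedHom p q (aGen p v) = aGen p (q v) := by
  show QuotientGroup.lift _ _ _ (QuotientGroup.mk _) = _
  erw [QuotientGroup.lift_mk']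
  show QuotientGroup.mk (FreeGroup.map (Sum.map q q) (FreeGroup.of (Sum.inl v))) = _
  rw [FreeGroup.map.of]
  rfl

@[simp] lemma inducedHom_bGen (q : X → Y) (v : X) :
    inducedHom p q (bGen p v) = bGen p (q v) := by
  show QuotientGroup.lift _ _ _ (QuotientGroup.mk _) = _
  erw [QuotientGroup.lift_mk']
  show QuotientGroup.mk (FreeGroup.map (Sum.map q q) (FreeGroup.of (Sum.inr v))) = _
  rw [FreeGroup.map.of]
  rfl

lemma inducedHom_comp (q : X → Y) (r : Y → Z) :
    (inducedHom p r).comp (inducedHom p q) = inducedHom p (r ∘ q) := by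
  apply lhom_ext <;> intro v <;> simp

lemma inducedHom_id' (q : X → X) (hq : ∀ x, q x = x) :
    inducedHom p q = MonoidHom.id (LGroup p X) := by
  apply lhom_ext <;> intro v <;> simp [hq]

lemma inducedHom_surjective {q : X → Y} (hq : Function.Surjective q) :
    Function.Surjective (inducedHom p q) := by
  intro g
  induction g using lind with
  | h1 => exact ⟨1, map_one _⟩
  | ha v => obtain ⟨w, hw⟩ := hq v; exact ⟨aGen p w, by simp [hw]⟩
  | hb v => obtain ⟨w, hw⟩ := hq v; exact ⟨bGen p w, by simp [hw]⟩
  | hinv g hg => obtain ⟨a, ha⟩ := hg; exact ⟨a⁻¹, by simp [ha]⟩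
  | hmul g h hg hh =>
    obtain ⟨a, ha⟩ := hg; obtain ⟨b, hb⟩ := hh
    exact ⟨a * b, by simp [ha, hb]⟩

lemma aGen_bGen_comm (v : X) : ⁅aGen p v, bGen p v⁆ = (1 : LGroup p X) := by
  have h : ⁅aGen p v, bGen p v⁆ =
      lmkHom p X ⁅FreeGroup.of (Sum.inl v), FreeGroup.of (Sum.inr v)⁆ :=
    (map_commutatorElement (lmkHom p X) _ _).symm
  rw [h]
  show QuotientGroup.mk _ = 1
  refine (QuotientGroup.eq_one_iff _).mpr ?_
  exact Subgroup.subset_normalClosure (Or.inr ⟨v, rfl⟩)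

end LG

/-! ### The model 2-nilpotent group of exponent `p`, and recovery of the index set -/

section Model

variable (p : ℕ)

/-- The free `ZMod p`-module on `X ⊕ X`. -/
abbrev VV (X : Type*) := (X ⊕ X) →₀ ZMod p

/-- Edges: pairs `(a_v, b_v)` in either order. -/
def Edg {X : Type*} : (X ⊕ X) → (X ⊕ X) → Prop := fun i j =>
  (∃ v, i = Sum.inl v ∧ j = Sum.inr v) ∨ (∃ v, i = Sum.inr v ∧ j = Sum.inl v)

/-- The receptacle for the "commutator" bilinear form. -/
abbrev WW (X : Type*) := (X ⊕ X) → (X ⊕ X) → ZMod p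

variable {X Y Z : Type*}

/-- The bilinear form recording products of coordinates away from edges. -/
def Bf (x y : VV p X) : WW p X := fun i j => if Edg i j then 0 else x i * y j

lemma Bf_add_left (x x' y : VV p X) : Bf p (x + x') y = Bf p x y + Bf p x' y := by
  funext i j
  show (if Edg i j then (0:ZMod p) else (x + x') i * y j) = _ + _
  simp only [Finsupp.add_apply, Bf, Pi.add_apply]
  split <;> ring

lemma Bf_add_right (x y y' : VV p X) : Bf p x (y + y') = Bf p x y + Bf p x y' := by
  funext i j
  show (if Edg i j then (0:ZMod p) else x i * (y + y') j) = _ + _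
  simp only [Finsupp.add_apply, Bf, Pi.add_apply]
  split <;> ring

@[simp] lemma Bf_zero_left (y : VV p X) : Bf p 0 y = 0 := by
  funext i j
  show (if Edg i j then (0:ZMod p) else (0 : VV p X) i * y j) = 0
  simp

@[simp] lemma Bf_zero_right (x : VV p X) : Bf p x 0 = 0 := by
  funext i j
  show (if Edg i j then (0:ZMod p) else x i * (0 : VV p X) j) = 0
  simp

lemma Bf_neg_left (x y : VV p X) : Bf p (-x) y = - Bf p x y := by
  funext i j
  show (if Edg i j then (0:ZMod p) else (-x) i * y j) = -(if Edg i j then (0:ZMod p) else x i * y j)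
  simp only [Finsupp.neg_apply]
  split <;> ring

lemma Bf_neg_right (x y : VV p X) : Bf p x (-y) = - Bf p x y := by
  funext i j
  show (if Edg i j then (0:ZMod p) else x i * (-y) j) = -(if Edg i j then (0:ZMod p) else x i * y j)
  simp only [Finsupp.neg_apply]
  split <;> ring

lemma Bf_nsmul_left (n : ℕ) (x y : VV p X) : Bf p (n • x) y = n • Bf p x y := by
  induction n with
  | zero => simp
  | succ n ih => rw [succ_nsmul, succ_nsmul, Bf_add_left, ih]

/-- The model group: `V × W` with multiplication twisted by `Bf`. -/
def MGr (X : Type*) := VV p X × WW p X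

instance : Group (MGr p X) where
  mul g h := (g.1 + h.1, g.2 + h.2 + Bf p g.1 h.1)
  one := (0, 0)
  inv g := (-g.1, -g.2 + Bf p g.1 g.1)
  mul_assoc a b c := by
    refine Prod.ext ?_ ?_
    · show a.1 + b.1 + c.1 = a.1 + (b.1 + c.1)
      exact add_assoc _ _ _
    · show a.2 + b.2 + Bf p a.1 b.1 + c.2 + Bf p (a.1 + b.1) c.1
        = a.2 + (b.2 + c.2 + Bf p b.1 c.1) + Bf p a.1 (b.1 + c.1)
      rw [Bf_add_left, Bf_add_right]
      abel
  one_mul a := by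
    refine Prod.ext ?_ ?_
    · show 0 + a.1 = a.1; exact zero_add _
    · show 0 + a.2 + Bf p 0 a.1 = a.2
      rw [Bf_zero_left]; abel
  mul_one a := by
    refine Prod.ext ?_ ?_
    · show a.1 + 0 = a.1; exact add_zero _
    · show a.2 + 0 + Bf p a.1 0 = a.2
      rw [Bf_zero_right]; abel
  inv_mul_cancel a := by
    refine Prod.ext ?_ ?_
    · show -a.1 + a.1 = 0; exact neg_add_cancel _
    · show -a.2 + Bf p a.1 a.1 + a.2 + Bf p (-a.1) a.1 = 0
      rw [Bf_neg_left]; abel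

lemma MGr.mul_def (g h : MGr p X) : g * h = (g.1 + h.1, g.2 + h.2 + Bf p g.1 h.1) := rfl
lemma MGr.one_def : (1 : MGr p X) = (0, 0) := rfl
lemma MGr.inv_def (g : MGr p X) : g⁻¹ = (-g.1, -g.2 + Bf p g.1 g.1) := rfl

lemma MGr.commutator_eq (g h : MGr p X) :
    ⁅g, h⁆ = ((0 : VV p X), Bf p g.1 h.1 - Bf p h.1 g.1) := by
  rw [commutatorElement_def]
  refine Prod.ext ?_ ?_
  · show g.1 + h.1 + -g.1 + -h.1 = 0
    abel
  · show g.2 + h.2 + Bf p g.1 h.1 + (-g.2 + Bf p g.1 g.1) + Bf p (g.1 + h.1) (-g.1)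
        + (-h.2 + Bf p h.1 h.1) + Bf p (g.1 + h.1 + -g.1) (-h.1)
      = Bf p g.1 h.1 - Bf p h.1 g.1
    simp only [Bf_add_left, Bf_neg_left, Bf_neg_right, neg_neg]
    abel

lemma MGr.central_commute (c g : MGr p X) (hc : c.1 = 0) : Commute c g := by
  have : c * g = g * c := by
    refine Prod.ext ?_ ?_
    · show c.1 + g.1 = g.1 + c.1
      abel
    · show c.2 + g.2 + Bf p c.1 g.1 = g.2 + c.2 + Bf p g.1 c.1
      rw [hc, Bf_zero_left, Bf_zero_right]; abel
  exact this

lemma MGr.triple_commutator (g h k : MGr p X) : ⁅⁅g, h⁆, k⁆ = 1 := by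
  rw [MGr.commutator_eq p g h]
  refine commutatorElement_eq_one_iff_commute.mpr ?_
  exact MGr.central_commute p _ k rfl

lemma MGr.pow_eq (g : MGr p X) (n : ℕ) :
    g ^ n = (n • g.1, n • g.2 + (n.choose 2) • Bf p g.1 g.1) := by
  induction n with
  | zero => simp [MGr.one_def]; rfl
  | succ n ih =>
    rw [pow_succ, ih]
    erw [MGr.mul_def]
    refine Prod.ext ?_ ?_
    · show n • g.1 + g.1 = (n + 1) • g.1
      rw [succ_nsmul]
    · show n • g.2 + (n.choose 2) • Bf p g.1 g.1 + g.2 + Bf p (n • g.1) g.1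
        = (n + 1) • g.2 + ((n + 1).choose 2) • Bf p g.1 g.1
      rw [Bf_nsmul_left, succ_nsmul,
        show (n + 1).choose 2 = n.choose 1 + n.choose 2 from Nat.choose_succ_succ n 1,
        Nat.choose_one_right, add_nsmul]
      abel

lemma smul_p_eq_zero {M : Type*} [AddCommMonoid M] [Module (ZMod p) M] (m : M) :
    p • m = 0 := by
  rw [← Nat.cast_smul_eq_nsmul (ZMod p), ZMod.natCast_self, zero_smul]

lemma MGr.pow_p [Fact p.Prime] (hodd : Odd p) (g : MGr p X) : g ^ p = 1 := by
  have hplt : 2 < p := by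
    have h2 : p ≠ 2 := by rintro rfl; exact (by norm_num : ¬ Odd 2) hodd
    have := (Fact.out : p.Prime).two_le
    omega
  obtain ⟨m, hm⟩ := (Fact.out : p.Prime).dvd_choose_self (by norm_num) hplt
  rw [MGr.pow_eq]
  refine Prod.ext ?_ ?_
  · show p • g.1 = 0; exact smul_p_eq_zero p _
  · show p • g.2 + (p.choose 2) • Bf p g.1 g.1 = 0
    rw [smul_p_eq_zero, hm, mul_smul, smul_p_eq_zero, zero_add]

lemma Bf_single_single (i j : X ⊕ X) (h : Edg i j) :
    Bf p (Finsupp.single i (1 : ZMod p)) (Finsupp.single j 1) = 0 := by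
  funext a b
  show (if Edg a b then (0 : ZMod p) else _ * _) = 0
  split
  · rfl
  · next hab =>
    rw [Finsupp.single_apply, Finsupp.single_apply]
    split
    · split
      · next h1 h2 => subst h1; subst h2; exact absurd h hab
      · ring
    · ring

/-- The canonical homomorphism from `L(X)` to the model group. -/
def Theta [Fact p.Prime] (hodd : Odd p) : LGroup p X →* MGr p X :=
  llift p (fun i => (Finsupp.single i 1, 0))
    (MGr.pow_p p hodd)
    (MGr.triple_commutator p)
    (fun v => by
      erw [MGr.commutator_eq]
      show ((0 : VV p X), _ - _) = (1 : MGr p X)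
      rw [Bf_single_single p _ _ (Or.inl ⟨v, rfl, rfl⟩),
        Bf_single_single p _ _ (Or.inr ⟨v, rfl, rfl⟩), sub_zero]
      rfl)

/-- The "abelianization" coordinate of `Theta`. -/
def θf [Fact p.Prime] (hodd : Odd p) : LGroup p X → VV p X := fun g => (Theta p hodd g).1

variable [Fact p.Prime] {hodd : Odd p}

lemma θ_one (hodd : Odd p) : θf p hodd (1 : LGroup p X) = 0 := by
  show (Theta p hodd (1 : LGroup p X)).1 = 0
  rw [map_one]; rfl

lemma θ_mul (hodd : Odd p) (g h : LGroup p X) :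
    θf p hodd (g * h) = θf p hodd g + θf p hodd h := by
  show (Theta p hodd (g * h)).1 = _
  rw [map_mul]; rfl

lemma θ_inv (hodd : Odd p) (g : LGroup p X) : θf p hodd g⁻¹ = - θf p hodd g := by
  show (Theta p hodd g⁻¹).1 = _
  rw [map_inv]; rfl

@[simp] lemma θ_aGen (hodd : Odd p) (v : X) :
    θf p hodd (aGen p v) = Finsupp.single (Sum.inl v) 1 := by
  show (Theta p hodd (aGen p v)).1 = _
  rw [Theta]; erw [llift_aGen]

@[simp] lemma θ_bGen (hodd : Odd p) (v : X) :
    θf p hodd (bGen p v) = Finsupp.single (Sum.inr v) 1 := by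
  show (Theta p hodd (bGen p v)).1 = _
  rw [Theta]; erw [llift_bGen]

lemma θ_comm (hodd : Odd p) {g h : LGroup p X} (hc : ⁅g, h⁆ = 1) :
    ∀ i j, ¬ Edg i j → θf p hodd g i * θf p hodd h j = θf p hodd h i * θf p hodd g j := by
  intro i j hij
  have h1 : ⁅Theta p hodd g, Theta p hodd h⁆ = 1 := by
    rw [← map_commutatorElement, hc, map_one]
  rw [MGr.commutator_eq, MGr.one_def] at h1
  have h2 : Bf p (Theta p hodd g).1 (Theta p hodd h).1
      = Bf p (Theta p hodd h).1 (Theta p hodd g).1 := by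
    have := congrArg Prod.snd h1
    simpa [sub_eq_zero] using this
  have h3 := congrFun (congrFun h2 i) j
  show (Theta p hodd g).1 i * (Theta p hodd h).1 j = (Theta p hodd h).1 i * (Theta p hodd g).1 j
  simpa [Bf, if_neg hij] using h3

/-- Any homomorphism `L(Y) →* L(Z)` induces a linear map on the `V`-coordinates. -/
lemma exists_lam (hodd : Odd p) (β : LGroup p Y →* LGroup p Z) :
    ∃ lam : VV p Y →ₗ[ZMod p] VV p Z, ∀ g, lam (θf p hodd g) = θf p hodd (β g) := by
  refine ⟨Finsupp.lift (VV p Z) (ZMod p) (Y ⊕ Y)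
    (fun i => θf p hodd (β (lmkHom p Y (FreeGroup.of i)))), ?_⟩
  intro g
  induction g using lind with
  | h1 => rw [θ_one, map_zero, map_one, θ_one]
  | ha v =>
    rw [θ_aGen]
    have : (aGen p v : LGroup p Y) = lmkHom p Y (FreeGroup.of (Sum.inl v)) := rfl
    rw [this]
    simp [Finsupp.lift_apply, Finsupp.sum_single_index]
  | hb v =>
    rw [θ_bGen]
    have : (bGen p v : LGroup p Y) = lmkHom p Y (FreeGroup.of (Sum.inr v)) := rfl
    rw [this]
    simp [Finsupp.lift_apply, Finsupp.sum_single_index]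
  | hinv g hg => rw [θ_inv, map_neg, hg, map_inv, θ_inv]
  | hmul g h hg hh => rw [θ_mul, map_add, hg, hh, map_mul, θ_mul]

lemma eq_comb {x : VV p X} {v : X} (h : ∀ k, k ≠ Sum.inl v → k ≠ Sum.inr v → x k = 0) :
    x = x (Sum.inl v) • Finsupp.single (Sum.inl v) (1 : ZMod p)
      + x (Sum.inr v) • Finsupp.single (Sum.inr v) 1 := by
  ext k
  rw [Finsupp.add_apply, Finsupp.smul_apply, Finsupp.smul_apply,
    Finsupp.single_apply, Finsupp.single_apply]
  by_cases h1 : k = Sum.inl v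
  · subst h1; simp
  · by_cases h2 : k = Sum.inr v
    · subst h2; simp
    · rw [h k h1 h2, if_neg (fun hh => h1 hh.symm), if_neg (fun hh => h2 hh.symm)]
      simp

/-- The key linear-algebra lemma: two "commuting" independent vectors span an edge plane. -/
lemma keyLemma {x y : VV p X}
    (hc : ∀ i j, ¬ Edg i j → x i * y j = y i * x j)
    (hi : ∀ a b : ZMod p, a • x + b • y = 0 → a = 0 ∧ b = 0) :
    ∃ v : X, ∀ k, k ≠ Sum.inl v → k ≠ Sum.inr v → x k = 0 ∧ y k = 0 := by
  have hfield : ∀ {a b : ZMod p}, a * b = 0 → a ≠ 0 → b = 0 := by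
    intro a b hab ha
    rcases mul_eq_zero.mp hab with h | h
    · exact absurd h ha
    · exact h
  -- find a nonzero 2×2 minor
  have hminor : ∃ i j, x i * y j ≠ y i * x j := by
    by_contra hno
    push_neg at hno
    by_cases hx : x = 0
    · have := hi 1 0 (by rw [hx, smul_zero, zero_smul, add_zero])
      exact one_ne_zero this.1
    · obtain ⟨i₀, hi₀⟩ := Finsupp.ne_iff.mp hx
      simp only [Finsupp.coe_zero, Pi.zero_apply] at hi₀
      have hdep : y i₀ • x + (- x i₀) • y = 0 := by
        ext j
        simp only [Finsupp.add_apply, Finsupp.smul_apply, smul_eq_mul,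
          Finsupp.coe_zero, Pi.zero_apply]
        linear_combination - hno i₀ j
      exact absurd (neg_eq_zero.mp (hi _ _ hdep).2) hi₀
  obtain ⟨i, j, hij⟩ := hminor
  have hedge : Edg i j := by
    by_contra h
    exact hij (hc i j h)
  -- reduce to the case i = inl v, j = inr v
  have main : ∀ v : X, x (Sum.inl v) * y (Sum.inr v) ≠ y (Sum.inl v) * x (Sum.inr v) →
      ∀ k, k ≠ Sum.inl v → k ≠ Sum.inr v → x k = 0 ∧ y k = 0 := by
    intro v hv k hk1 hk2
    have hne1 : ¬ Edg (Sum.inl v) k := by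
      rintro (⟨w, hw1, hw2⟩ | ⟨w, hw1, hw2⟩)
      · cases hw1; exact hk2 hw2
      · cases hw1
    have hne2 : ¬ Edg (Sum.inr v) k := by
      rintro (⟨w, hw1, hw2⟩ | ⟨w, hw1, hw2⟩)
      · cases hw1
      · cases hw1; exact hk1 hw2
    have e1 := hc _ _ hne1
    have e2 := hc _ _ hne2
    set a1 := x (Sum.inl v); set a2 := x (Sum.inr v)
    set b1 := y (Sum.inl v); set b2 := y (Sum.inr v)
    have hD : a1 * b2 - b1 * a2 ≠ 0 := sub_ne_zero_of_ne hv
    constructor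
    · have hxk : x k * (a1 * b2 - b1 * a2) = 0 := by
        linear_combination a2 * e1 - a1 * e2
      rcases mul_eq_zero.mp hxk with h | h
      · exact h
      · exact absurd h hD
    · have hyk : y k * (a1 * b2 - b1 * a2) = 0 := by
        linear_combination b2 * e1 - b1 * e2
      rcases mul_eq_zero.mp hyk with h | h
      · exact h
      · exact absurd h hD
  rcases hedge with ⟨v, rfl, rfl⟩ | ⟨v, rfl, rfl⟩
  · exact ⟨v, main v hij⟩
  · refine ⟨v, main v ?_⟩
    intro h
    apply hij
    linear_combination - h

/-- `f : X → Y` tracks the homomorphism `α : L(X) →* L(Y)` on generators,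
in the sense that the images of `a_v, b_v` live on the plane of `f v`. -/
def PlProp (hodd : Odd p) (α : LGroup p X →* LGroup p Y) (f : X → Y) : Prop :=
  ∀ v k, k ≠ Sum.inl (f v) → k ≠ Sum.inr (f v) →
    θf p hodd (α (aGen p v)) k = 0 ∧ θf p hodd (α (bGen p v)) k = 0

lemma theta_comp_eq (hodd : Odd p) {q : X → Z}
    (α : LGroup p X →* LGroup p Y) (β : LGroup p Y →* LGroup p Z)
    (hβα : β.comp α = inducedHom p q) (v : X) :
    θf p hodd (β (α (aGen p v))) = Finsupp.single (Sum.inl (q v)) 1 ∧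
    θf p hodd (β (α (bGen p v))) = Finsupp.single (Sum.inr (q v)) 1 := by
  constructor
  · have h1 : β (α (aGen p v)) = inducedHom p q (aGen p v) := by
      rw [← hβα]; rfl
    rw [h1, inducedHom_aGen, θ_aGen]
  · have h1 : β (α (bGen p v)) = inducedHom p q (bGen p v) := by
      rw [← hβα]; rfl
    rw [h1, inducedHom_bGen, θ_bGen]

lemma single_comb_eval {i : Y ⊕ Y} {w : Y} {c1 c2 d1 d2 : ZMod p}
    (h : Finsupp.single i (1 : ZMod p)
      = (c1 • Finsupp.single (Sum.inl w) (1 : ZMod p) + c2 • Finsupp.single (Sum.inr w) 1)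
        + (d1 • Finsupp.single (Sum.inl w) (1 : ZMod p) + d2 • Finsupp.single (Sum.inr w) 1))
    (h1 : i ≠ Sum.inl w) (h2 : i ≠ Sum.inr w) : False := by
  have hthis := DFunLike.congr_fun h i
  have e1 : ¬ (Sum.inl w = i) := fun hh => h1 hh.symm
  have e2 : ¬ (Sum.inr w = i) := fun hh => h2 hh.symm
  simp only [Finsupp.add_apply, Finsupp.smul_apply, Finsupp.single_apply, smul_eq_mul,
    if_pos rfl, if_neg e1, if_neg e2, mul_zero, add_zero] at hthis
  exact one_ne_zero hthis

lemma exists_planeMap (hodd : Odd p) {q : X → Z}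
    (α : LGroup p X →* LGroup p Y) (β : LGroup p Y →* LGroup p Z)
    (hβα : β.comp α = inducedHom p q) :
    ∃ f : X → Y, PlProp p hodd α f := by
  obtain ⟨lam, hlam⟩ := exists_lam p hodd β
  have key : ∀ v : X, ∃ w : Y, ∀ k, k ≠ Sum.inl w → k ≠ Sum.inr w →
      θf p hodd (α (aGen p v)) k = 0 ∧ θf p hodd (α (bGen p v)) k = 0 := by
    intro v
    set x := θf p hodd (α (aGen p v)) with hxdef
    set y := θf p hodd (α (bGen p v)) with hydef
    have hcom : ⁅α (aGen p v), α (bGen p v)⁆ = 1 := by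
      rw [← map_commutatorElement, aGen_bGen_comm, map_one]
    have hc : ∀ i j, ¬ Edg i j → x i * y j = y i * x j := θ_comm p hodd hcom
    have hlx : lam x = Finsupp.single (Sum.inl (q v)) 1 := by
      rw [hxdef, hlam, (theta_comp_eq p hodd α β hβα v).1]
    have hly : lam y = Finsupp.single (Sum.inr (q v)) 1 := by
      rw [hydef, hlam, (theta_comp_eq p hodd α β hβα v).2]
    have hi : ∀ a b : ZMod p, a • x + b • y = 0 → a = 0 ∧ b = 0 := by
      intro a b hab
      have h0 : a • lam x + b • lam y = 0 := by
        rw [← map_smul, ← map_smul, ← map_add, hab, map_zero]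
      rw [hlx, hly] at h0
      constructor
      · have := DFunLike.congr_fun h0 (Sum.inl (q v))
        simpa [Finsupp.single_apply] using this
      · have := DFunLike.congr_fun h0 (Sum.inr (q v))
        simpa [Finsupp.single_apply] using this
    exact keyLemma p hc hi
  exact ⟨fun v => (key v).choose, fun v => (key v).choose_spec⟩

lemma comp_planeMaps (hodd : Odd p) {q : X → Z}
    (α : LGroup p X →* LGroup p Y) (β : LGroup p Y →* LGroup p Z)
    (f : X → Y) (g : Y → Z) (hf : PlProp p hodd α f) (hg : PlProp p hodd β g)
    (hβα : β.comp α = inducedHom p q) : ∀ v, g (f v) = q v := by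
  intro v
  obtain ⟨lam, hlam⟩ := exists_lam p hodd β
  set x := θf p hodd (α (aGen p v)) with hxdef
  have hx : x = x (Sum.inl (f v)) • Finsupp.single (Sum.inl (f v)) 1
      + x (Sum.inr (f v)) • Finsupp.single (Sum.inr (f v)) 1 :=
    eq_comb p (fun k h1 h2 => (hf v k h1 h2).1)
  have hsingle_a : (Finsupp.single (Sum.inl (f v)) (1 : ZMod p)) = θf p hodd (aGen p (f v)) :=
    (θ_aGen p hodd (f v)).symm
  have hsingle_b : (Finsupp.single (Sum.inr (f v)) (1 : ZMod p)) = θf p hodd (bGen p (f v)) :=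
    (θ_bGen p hodd (f v)).symm
  have hz1 : lam (Finsupp.single (Sum.inl (f v)) 1)
      = θf p hodd (β (aGen p (f v))) := by rw [hsingle_a, hlam]
  have hz2 : lam (Finsupp.single (Sum.inr (f v)) 1)
      = θf p hodd (β (bGen p (f v))) := by rw [hsingle_b, hlam]
  have hw1 : θf p hodd (β (aGen p (f v)))
      = θf p hodd (β (aGen p (f v))) (Sum.inl (g (f v))) • Finsupp.single (Sum.inl (g (f v))) 1
        + θf p hodd (β (aGen p (f v))) (Sum.inr (g (f v))) •
            Finsupp.single (Sum.inr (g (f v))) 1 :=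
    eq_comb p (fun k h1 h2 => (hg (f v) k h1 h2).1)
  have hw2 : θf p hodd (β (bGen p (f v)))
      = θf p hodd (β (bGen p (f v))) (Sum.inl (g (f v))) • Finsupp.single (Sum.inl (g (f v))) 1
        + θf p hodd (β (bGen p (f v))) (Sum.inr (g (f v))) •
            Finsupp.single (Sum.inr (g (f v))) 1 :=
    eq_comb p (fun k h1 h2 => (hg (f v) k h1 h2).2)
  have hmain : Finsupp.single (Sum.inl (q v)) (1 : ZMod p) = lam x := by
    rw [hxdef, hlam, (theta_comp_eq p hodd α β hβα v).1]
  rw [hx, map_add, map_smul, map_smul, hz1, hz2, hw1, hw2, smul_add, smul_add,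
    smul_smul, smul_smul, smul_smul, smul_smul] at hmain
  by_contra hne
  refine single_comb_eval p hmain ?_ ?_
  · intro hh
    exact hne (Sum.inl.inj hh).symm
  · exact fun hh => Sum.inl_ne_inr hh

end Model

/-! ### Transition maps and the groups `G_T` -/

section Tree

variable (p : ℕ) {T : Set (List ℕ)} (hT : IsPrunedTree T)

/-- Transition homomorphism between levels. -/
def Trn {i j : ℕ} (h : i ≤ j) : LGroup p (Lv T j) →* LGroup p (Lv T i) :=
  inducedHom p (takeNode hT h)

lemma Trn_self (i : ℕ) : Trn p hT (le_refl i) = MonoidHom.id _ := by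
  rw [Trn, takeNode_id]
  exact inducedHom_id' p _ (fun _ => rfl)

lemma Trn_comp {i j k : ℕ} (hij : i ≤ j) (hjk : j ≤ k) :
    (Trn p hT hij).comp (Trn p hT hjk) = Trn p hT (hij.trans hjk) := by
  rw [Trn, Trn, Trn, inducedHom_comp, takeNode_comp]

lemma GT_coord {g : ∀ n, LGroup p (Lv T n)} (hg : g ∈ GT p T hT) {i j : ℕ} (h : i ≤ j) :
    Trn p hT h (g j) = g i := by
  induction j, h using Nat.le_induction with
  | base => rw [Trn_self]; rfl
  | succ j hij ih =>
    have hstep : Trn p hT (Nat.le_succ j) (g (j + 1)) = g j := by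
      have h2 := hg j
      rw [levelPred_eq_takeNode] at h2
      exact h2
    have h3 : (Trn p hT hij).comp (Trn p hT (Nat.le_succ j)) =
        Trn p hT (hij.trans (Nat.le_succ j)) := Trn_comp p hT hij (Nat.le_succ j)
    have h4 := DFunLike.congr_fun h3 (g (j + 1))
    rw [MonoidHom.comp_apply, hstep, ih] at h4
    exact h4.symm

lemma exists_ext (hT0 : IsPrunedTree T) {s : List ℕ} (hs : s ∈ T) : ∀ m, s.length ≤ m →
    ∃ t ∈ T, s <+: t ∧ t.length = m := by
  intro m hm
  induction m, hm using Nat.le_induction with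
  | base => exact ⟨s, hs, List.prefix_refl s, rfl⟩
  | succ m hm ih =>
    obtain ⟨t, ht, hpre, hlen⟩ := ih
    obtain ⟨t', ht', hpre', hlen'⟩ := exists_succ hT0 ht
    exact ⟨t', ht', hpre.trans hpre', by omega⟩

lemma takeNode_surjective {i j : ℕ} (h : i ≤ j) :
    Function.Surjective (takeNode hT (i := i) (j := j) h) := by
  intro s
  obtain ⟨t, ht, hpre, hlen⟩ := exists_ext hT s.2.1 (j + 1) (by rw [s.2.2]; omega)
  refine ⟨⟨t, ht, hlen⟩, ?_⟩
  apply Subtype.ext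
  show t.take (i + 1) = s.1
  have h2 : s.1 = t.take s.1.length := List.prefix_iff_eq_take.mp hpre
  rw [s.2.2] at h2
  exact h2.symm

lemma Trn_surjective {i j : ℕ} (h : i ≤ j) : Function.Surjective (Trn p hT h) :=
  inducedHom_surjective p (takeNode_surjective hT h)

/-- One-step choice of preimage along a transition map. -/
def liftStep {k : ℕ} (x : LGroup p (Lv T k)) : LGroup p (Lv T (k + 1)) :=
  (Trn_surjective p hT (Nat.le_succ k) x).choose

/-- Iterated choice of preimages. -/
def liftSeq (N : ℕ) (a : LGroup p (Lv T N)) (n : ℕ) (h : N ≤ n) : LGroup p (Lv T n) :=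
  Nat.leRecOn h (fun {k} => liftStep p hT) a

lemma liftSeq_base (N : ℕ) (a : LGroup p (Lv T N)) : liftSeq p hT N a N le_rfl = a :=
  Nat.leRecOn_self (C := fun n => LGroup p (Lv T n)) (next := fun {k} => liftStep p hT) a

lemma liftSeq_succ (N : ℕ) (a : LGroup p (Lv T N)) (n : ℕ) (h : N ≤ n) :
    liftSeq p hT N a (n + 1) (h.trans (Nat.le_succ n)) = liftStep p hT (liftSeq p hT N a n h) :=
  Nat.leRecOn_succ (C := fun n => LGroup p (Lv T n)) (next := fun {k} => liftStep p hT) h a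

lemma proj_surjective (N : ℕ) (a : LGroup p (Lv T N)) :
    ∃ g ∈ GT p T hT, g N = a := by
  classical
  set u := liftSeq p hT N a with hu
  have hu_base : u N le_rfl = a := liftSeq_base p hT N a
  have hu_spec : ∀ n (h : N ≤ n),
      Trn p hT (Nat.le_succ n) (u (n + 1) (h.trans (Nat.le_succ n))) = u n h := by
    intro n h
    rw [hu, liftSeq_succ p hT N a n h]
    exact (Trn_surjective p hT (Nat.le_succ n) (liftSeq p hT N a n h)).choose_spec
  refine ⟨fun n => if h : N ≤ n then u n h else Trn p hT (le_of_not_ge h) a, ?_, ?_⟩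
  · intro n
    show inducedHom p (levelPred T hT (n + 1)) _ = _
    rw [levelPred_eq_takeNode]
    show Trn p hT (Nat.le_succ n)
        (if h : N ≤ n + 1 then u (n + 1) h else Trn p hT (le_of_not_ge h) a)
        = (if h : N ≤ n then u n h else Trn p hT (le_of_not_ge h) a)
    by_cases h1 : N ≤ n
    · rw [dif_pos (h1.trans (Nat.le_succ n)), dif_pos h1]
      exact hu_spec n h1
    · rw [dif_neg h1]
      by_cases h2 : N ≤ n + 1
      · rw [dif_pos h2]
        have hN : N = n + 1 := le_antisymm h2 (by omega)
        subst hN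
        have hba : u (n + 1) h2 = a := hu_base
        rw [hba]
      · rw [dif_neg h2]
        have h3 := Trn_comp p hT (Nat.le_succ n) (le_of_not_ge h2)
        have h4 := DFunLike.congr_fun h3 a
        rw [MonoidHom.comp_apply] at h4
        exact h4
  · show (if h : N ≤ N then u N h else _) = a
    rw [dif_pos le_rfl]
    exact hu_base

/-- Continuity gives a bound on the coordinates needed to determine a coordinate
of the image. -/
lemma exists_kernel_bound {A : Type*} [Group A] [TopologicalSpace A] [DiscreteTopology A]
    (F : ↥(GT p T hT) → A) (hF : Continuous F) (hF1 : F 1 = 1) :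
    ∃ m : ℕ, ∀ g : ↥(GT p T hT), (∀ i ≤ m, g.1 i = 1) → F g = 1 := by
  have hopen : IsOpen (F ⁻¹' {1}) := (isOpen_discrete _).preimage hF
  have hmem : F ⁻¹' {1} ∈ nhds (1 : ↥(GT p T hT)) :=
    hopen.mem_nhds (by simp [hF1])
  rw [nhds_subtype, Filter.mem_comap] at hmem
  obtain ⟨V, hV, hVsub⟩ := hmem
  rw [show ((1 : ↥(GT p T hT)) : ∀ n, LGroup p (Lv T n)) = (1 : ∀ n, LGroup p (Lv T n))
      from rfl, nhds_pi, Filter.mem_pi] at hV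
  obtain ⟨I, hIfin, t, htmem, htsub⟩ := hV
  obtain ⟨m, hm⟩ := hIfin.bddAbove
  refine ⟨m, fun g hg => ?_⟩
  have hgV : g.1 ∈ V := by
    apply htsub
    intro i hi
    have : g.1 i = 1 := hg i (hm hi)
    rw [this]
    exact mem_of_mem_nhds (htmem i)
  exact hVsub hgV

end Tree

/-! ### Intertwinings of level systems -/

section Inter

variable (p : ℕ) (T U : Set (List ℕ)) (hT : IsPrunedTree T) (hU : IsPrunedTree U)

/-- An intertwining of the level systems of two trees. -/
structure SetInter where
  s : ℕ → ℕ
  t : ℕ → ℕ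
  hs : ∀ k, s k ≤ s (k + 1)
  ht : ∀ k, t k ≤ t (k + 1)
  hsk : ∀ k, k ≤ s k
  htk : ∀ k, k ≤ t k
  f : ∀ k, Lv T (s k) → Lv U (t k)
  g : ∀ k, Lv U (t (k + 1)) → Lv T (s k)
  hgf : ∀ k, (g k) ∘ (f (k + 1)) = takeNode hT (hs k)
  hfg : ∀ k, (f k) ∘ (g k) = takeNode hU (ht k)

/-- An intertwining of the pro-group systems of two trees. -/
structure GpInter where
  s : ℕ → ℕ
  t : ℕ → ℕ
  hs : ∀ k, s k ≤ s (k + 1)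
  ht : ∀ k, t k ≤ t (k + 1)
  hsk : ∀ k, k ≤ s k
  htk : ∀ k, k ≤ t k
  α : ∀ k, LGroup p (Lv T (s k)) →* LGroup p (Lv U (t k))
  β : ∀ k, LGroup p (Lv U (t (k + 1))) →* LGroup p (Lv T (s k))
  hβα : ∀ k, (β k).comp (α (k + 1)) = Trn p hT (hs k)
  hαβ : ∀ k, (α k).comp (β k) = Trn p hU (ht k)

variable {p T U hT hU}

/-- From a set intertwining to a group intertwining, by functoriality. -/
def SetInter.toGp (SI : SetInter T U hT hU) : GpInter p T U hT hU where
  s := SI.s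
  t := SI.t
  hs := SI.hs
  ht := SI.ht
  hsk := SI.hsk
  htk := SI.htk
  α := fun k => inducedHom p (SI.f k)
  β := fun k => inducedHom p (SI.g k)
  hβα := fun k => by rw [inducedHom_comp, SI.hgf k]; rfl
  hαβ := fun k => by rw [inducedHom_comp, SI.hfg k]; rfl

namespace GpInter

variable (I : GpInter p T U hT hU)

lemma smono : Monotone I.s := monotone_nat_of_le_succ I.hs
lemma tmono : Monotone I.t := monotone_nat_of_le_succ I.ht

lemma stepEq {g : ∀ n, LGroup p (Lv T n)} (hg : g ∈ GT p T hT) (j : ℕ) :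
    Trn p hU (I.ht j) (I.α (j + 1) (g (I.s (j + 1)))) = I.α j (g (I.s j)) := by
  have h1 := DFunLike.congr_fun (I.hαβ j) (I.α (j + 1) (g (I.s (j + 1))))
  rw [MonoidHom.comp_apply] at h1
  rw [← h1]
  congr 1
  have h2 := DFunLike.congr_fun (I.hβα j) (g (I.s (j + 1)))
  rw [MonoidHom.comp_apply] at h2
  rw [h2]
  exact GT_coord p hT hg (I.hs j)

lemma coordEq {g : ∀ n, LGroup p (Lv T n)} (hg : g ∈ GT p T hT) {j j' : ℕ}
    (hjj' : j ≤ j') {k : ℕ} (hk : k ≤ I.t j) (hk' : k ≤ I.t j') :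
    Trn p hU hk' (I.α j' (g (I.s j'))) = Trn p hU hk (I.α j (g (I.s j))) := by
  revert hk'
  induction j', hjj' using Nat.le_induction with
  | base => intro hk'; rfl
  | succ j' hjj' ih =>
    intro hk'
    have hkj' : k ≤ I.t j' := hk.trans (I.tmono hjj')
    have h1 := DFunLike.congr_fun (Trn_comp p hU hkj' (I.ht j'))
      (I.α (j' + 1) (g (I.s (j' + 1))))
    rw [MonoidHom.comp_apply] at h1
    calc Trn p hU hk' (I.α (j' + 1) (g (I.s (j' + 1))))
        = Trn p hU hkj' (Trn p hU (I.ht j') (I.α (j' + 1) (g (I.s (j' + 1))))) := h1.symm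
      _ = Trn p hU hkj' (I.α j' (g (I.s j'))) := by rw [I.stepEq hg j']
      _ = Trn p hU hk (I.α j (g (I.s j))) := ih hkj'

lemma coordEq' {g : ∀ n, LGroup p (Lv T n)} (hg : g ∈ GT p T hT) {j j' : ℕ}
    {k : ℕ} (hk : k ≤ I.t j) (hk' : k ≤ I.t j') :
    Trn p hU hk' (I.α j' (g (I.s j'))) = Trn p hU hk (I.α j (g (I.s j))) := by
  rcases le_total j j' with h | h
  · exact I.coordEq hg h hk hk'
  · exact (I.coordEq hg h hk' hk).symm

/-- The symmetric group intertwining, with the two trees swapped (shifted by one). -/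
def symmInter : GpInter p U T hU hT where
  s := fun k => I.t (k + 1)
  t := fun k => I.s k
  hs := fun k => I.ht (k + 1)
  ht := fun k => I.hs k
  hsk := fun k => (Nat.le_succ k).trans (I.htk (k + 1))
  htk := fun k => I.hsk k
  α := fun k => I.β k
  β := fun k => I.α (k + 1)
  hβα := fun k => I.hαβ (k + 1)
  hαβ := fun k => I.hβα k

/-- The induced map on inverse limits. -/
def eFun (g : ↥(GT p T hT)) : ↥(GT p U hU) :=
  ⟨fun k => Trn p hU (I.htk k) (I.α k (g.1 (I.s k))), by
    intro n
    show inducedHom p (levelPred U hU (n + 1)) _ = _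
    rw [levelPred_eq_takeNode]
    show Trn p hU (Nat.le_succ n)
      (Trn p hU (I.htk (n + 1)) (I.α (n + 1) (g.1 (I.s (n + 1))))) = _
    have h1 := DFunLike.congr_fun (Trn_comp p hU (Nat.le_succ n) (I.htk (n + 1)))
      (I.α (n + 1) (g.1 (I.s (n + 1))))
    rw [MonoidHom.comp_apply] at h1
    rw [h1]
    exact I.coordEq g.2 (Nat.le_succ n) (I.htk n) _⟩

lemma eFun_coord (g : ↥(GT p T hT)) (k : ℕ) :
    (I.eFun g).1 (I.t k) = I.α k (g.1 (I.s k)) := by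
  show Trn p hU (I.htk (I.t k)) (I.α (I.t k) (g.1 (I.s (I.t k)))) = _
  have h2 := I.coordEq' (j := I.t k) (j' := k) g.2 (I.htk (I.t k)) (le_refl (I.t k))
  rw [← h2]
  exact DFunLike.congr_fun (Trn_self p hU (I.t k)) (I.α k (g.1 (I.s k)))

lemma eFun_mul (g h : ↥(GT p T hT)) : I.eFun (g * h) = I.eFun g * I.eFun h := by
  apply Subtype.ext
  funext k
  show Trn p hU (I.htk k) (I.α k ((g.1 * h.1) (I.s k))) = _
  have : (g.1 * h.1) (I.s k) = g.1 (I.s k) * h.1 (I.s k) := rfl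
  rw [this, map_mul, map_mul]
  rfl

lemma symm_cancel (g : ↥(GT p T hT)) : I.symmInter.eFun (I.eFun g) = g := by
  apply Subtype.ext
  funext k
  show Trn p hT (I.hsk k) (I.β k ((I.eFun g).1 (I.t (k + 1)))) = g.1 k
  rw [I.eFun_coord g (k + 1)]
  have h2 := DFunLike.congr_fun (I.hβα k) (g.1 (I.s (k + 1)))
  rw [MonoidHom.comp_apply] at h2
  rw [h2, GT_coord p hT g.2 (I.hs k), GT_coord p hT g.2 (I.hsk k)]

lemma cancel_symm (h : ↥(GT p U hU)) : I.eFun (I.symmInter.eFun h) = h := by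
  apply Subtype.ext
  funext k
  show Trn p hU (I.htk k) (I.α k ((I.symmInter.eFun h).1 (I.s k))) = h.1 k
  have h4 : (I.symmInter.eFun h).1 (I.s k) = I.β k (h.1 (I.t (k + 1))) :=
    I.symmInter.eFun_coord h k
  rw [h4]
  have h2 := DFunLike.congr_fun (I.hαβ k) (h.1 (I.t (k + 1)))
  rw [MonoidHom.comp_apply] at h2
  rw [h2, GT_coord p hU h.2 (I.ht k), GT_coord p hU h.2 (I.htk k)]

lemma eFun_continuous : Continuous I.eFun := by
  apply Continuous.subtype_mk
  apply continuous_pi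
  intro k
  have h1 : Continuous (fun x : LGroup p (Lv T (I.s k)) => Trn p hU (I.htk k) (I.α k x)) :=
    continuous_of_discreteTopology
  exact h1.comp ((continuous_apply (I.s k)).comp continuous_subtype_val)

/-- The topological group isomorphism induced by a group intertwining. -/
lemma toTopIso (J : GpInter p T U hT hU) : TopIsoGrp ↥(GT p T hT) ↥(GT p U hU) := by
  refine ⟨{ toFun := GpInter.eFun J, invFun := GpInter.eFun (GpInter.symmInter J),
            left_inv := GpInter.symm_cancel J, right_inv := GpInter.cancel_symm J,
            map_mul' := GpInter.eFun_mul J }, GpInter.eFun_continuous J,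
          GpInter.eFun_continuous (GpInter.symmInter J)⟩

end GpInter

end Inter

section Inter2

variable (p : ℕ) {T U : Set (List ℕ)} (hT : IsPrunedTree T) (hU : IsPrunedTree U)

lemma lift_elem (N : ℕ) (a : LGroup p (Lv T N)) : ∃ g : ↥(GT p T hT), g.1 N = a := by
  obtain ⟨g, hg, hgm⟩ := proj_surjective p hT N a
  exact ⟨⟨g, hg⟩, hgm⟩

lemma exists_phi (e : ↥(GT p T hT) ≃* ↥(GT p U hU)) {m n : ℕ}
    (hsub : ∀ g : ↥(GT p T hT), (∀ i ≤ m, g.1 i = 1) → (e g).1 n = 1) :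
    ∃ φ : LGroup p (Lv T m) →* LGroup p (Lv U n),
      ∀ g : ↥(GT p T hT), φ (g.1 m) = (e g).1 n := by
  have wd : ∀ g g' : ↥(GT p T hT), g.1 m = g'.1 m → (e g).1 n = (e g').1 n := by
    intro g g' hgg'
    have hker : ∀ i ≤ m, ((g⁻¹ * g' : ↥(GT p T hT)) : ∀ k, LGroup p (Lv T k)) i = 1 := by
      intro i him
      show (g.1 i)⁻¹ * g'.1 i = 1
      rw [← GT_coord p hT g.2 him, ← GT_coord p hT g'.2 him, hgg']
      simp
    have h1 := hsub _ hker
    rw [map_mul, map_inv] at h1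
    have h2 : ((e g).1 n)⁻¹ * (e g').1 n = 1 := h1
    exact inv_mul_eq_one.mp h2
  refine ⟨MonoidHom.mk' (fun a => (e (lift_elem p hT m a).choose).1 n) ?_, ?_⟩
  · intro a b
    have hab := (lift_elem p hT m (a * b)).choose_spec
    have ha := (lift_elem p hT m a).choose_spec
    have hb := (lift_elem p hT m b).choose_spec
    have h3 := wd (lift_elem p hT m (a * b)).choose
      ((lift_elem p hT m a).choose * (lift_elem p hT m b).choose)
      (by
        rw [hab]
        show a * b = (lift_elem p hT m a).choose.1 m * (lift_elem p hT m b).choose.1 m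
        rw [ha, hb])
    show (e (lift_elem p hT m (a * b)).choose).1 n
        = (e (lift_elem p hT m a).choose).1 n * (e (lift_elem p hT m b).choose).1 n
    rw [h3, map_mul]
    rfl
  · intro g
    exact wd _ g (lift_elem p hT m (g.1 m)).choose_spec

lemma topiso_to_gp (h : TopIsoGrp ↥(GT p T hT) ↥(GT p U hU)) :
    Nonempty (GpInter p T U hT hU) := by
  obtain ⟨e, hec, hec'⟩ := h
  have EB : ∀ n, ∃ m, ∀ g : ↥(GT p T hT), (∀ i ≤ m, g.1 i = 1) → (e g).1 n = 1 := by
    intro n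
    apply exists_kernel_bound p hT (fun g => (e g).1 n)
    · exact (continuous_apply n).comp (continuous_subtype_val.comp hec)
    · rw [map_one]; rfl
  have FB : ∀ m, ∃ n, ∀ g : ↥(GT p U hU), (∀ i ≤ n, g.1 i = 1) → (e.symm g).1 m = 1 := by
    intro m
    apply exists_kernel_bound p hU (fun g => (e.symm g).1 m)
    · exact (continuous_apply m).comp (continuous_subtype_val.comp hec')
    · rw [map_one]; rfl
  choose M hM using EB
  choose N hN using FB
  let P : ℕ → ℕ × ℕ := fun k => Nat.rec (M 0, 0)
    (fun _ q => (max (q.1 + 1) (M (max (q.2 + 1) (N q.1))), max (q.2 + 1) (N q.1))) k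
  let s : ℕ → ℕ := fun k => (P k).1
  let t : ℕ → ℕ := fun k => (P k).2
  have hPsucc : ∀ k, P (k + 1) = (max ((P k).1 + 1) (M (max ((P k).2 + 1) (N (P k).1))),
      max ((P k).2 + 1) (N (P k).1)) := fun k => rfl
  have hs' : ∀ k, s k + 1 ≤ s (k + 1) := by
    intro k
    show s k + 1 ≤ (P (k + 1)).1
    rw [hPsucc k]
    exact le_max_left _ _
  have ht' : ∀ k, t k + 1 ≤ t (k + 1) := by
    intro k
    show t k + 1 ≤ (P (k + 1)).2
    rw [hPsucc k]
    exact le_max_left _ _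
  have hMs : ∀ k, M (t k) ≤ s k := by
    intro k
    cases k with
    | zero => exact le_rfl
    | succ k =>
      show M ((P (k + 1)).2) ≤ (P (k + 1)).1
      rw [hPsucc k]
      exact le_max_right _ _
  have hNt : ∀ k, N (s k) ≤ t (k + 1) := by
    intro k
    show N ((P k).1) ≤ (P (k + 1)).2
    rw [hPsucc k]
    exact le_max_right _ _
  have hsk : ∀ k, k ≤ s k := by
    intro k
    induction k with
    | zero => exact Nat.zero_le _
    | succ k ih => have := hs' k; omega
  have htk : ∀ k, k ≤ t k := by
    intro k
    induction k with
    | zero => exact Nat.zero_le _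
    | succ k ih => have := ht' k; omega
  have Esub : ∀ k, ∀ g : ↥(GT p T hT), (∀ i ≤ s k, g.1 i = 1) → (e g).1 (t k) = 1 :=
    fun k g hg => hM (t k) g (fun i hi => hg i (hi.trans (hMs k)))
  have Fsub : ∀ k, ∀ g : ↥(GT p U hU), (∀ i ≤ t (k + 1), g.1 i = 1) →
      (e.symm g).1 (s k) = 1 :=
    fun k g hg => hN (s k) g (fun i hi => hg i (hi.trans (hNt k)))
  choose α hα using fun k => exists_phi p hT hU e (Esub k)
  choose β hβ using fun k => exists_phi p hU hT e.symm (Fsub k)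
  refine ⟨{
    s := s, t := t,
    hs := fun k => (Nat.le_succ (s k)).trans (hs' k),
    ht := fun k => (Nat.le_succ (t k)).trans (ht' k),
    hsk := hsk, htk := htk, α := α, β := β, hβα := ?_, hαβ := ?_ }⟩
  · intro k
    apply MonoidHom.ext
    intro a
    have hgm := (lift_elem p hT (s (k + 1)) a).choose_spec
    set g := (lift_elem p hT (s (k + 1)) a).choose with hgdef
    show β k (α (k + 1) a) = Trn p hT _ a
    rw [← hgm, hα (k + 1) g, hβ k (e g), MulEquiv.symm_apply_apply,
      GT_coord p hT g.2]
  · intro k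
    apply MonoidHom.ext
    intro b
    have hbm := (lift_elem p hU (t (k + 1)) b).choose_spec
    set hh := (lift_elem p hU (t (k + 1)) b).choose with hhdef
    show α k (β k b) = Trn p hU _ b
    rw [← hbm, hβ k hh, hα k (e.symm hh), MulEquiv.apply_symm_apply,
      GT_coord p hU hh.2]

lemma gp_to_set [Fact p.Prime] (hodd : Odd p) (I : GpInter p T U hT hU) :
    Nonempty (SetInter T U hT hU) := by
  have hf : ∀ k, ∃ f : Lv T (I.s (k + 1)) → Lv U (I.t (k + 1)),
      PlProp p hodd (I.α (k + 1)) f :=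
    fun k => exists_planeMap p hodd (I.α (k + 1)) (I.β k) (I.hβα k)
  have hg : ∀ k, ∃ g : Lv U (I.t (k + 1)) → Lv T (I.s k), PlProp p hodd (I.β k) g :=
    fun k => exists_planeMap p hodd (I.β k) (I.α k) (I.hαβ k)
  choose f hfP using hf
  choose g hgP using hg
  refine ⟨{
    s := fun k => I.s (k + 1), t := fun k => I.t (k + 1),
    hs := fun k => I.hs (k + 1), ht := fun k => I.ht (k + 1),
    hsk := fun k => (Nat.le_succ k).trans (I.hsk (k + 1)),
    htk := fun k => (Nat.le_succ k).trans (I.htk (k + 1)),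
    f := f, g := fun k => g (k + 1), hgf := ?_, hfg := ?_ }⟩
  · intro k
    funext v
    exact comp_planeMaps p hodd (I.α (k + 2)) (I.β (k + 1)) (f (k + 1)) (g (k + 1))
      (hfP (k + 1)) (hgP (k + 1)) (I.hβα (k + 1)) v
  · intro k
    funext v
    exact comp_planeMaps p hodd (I.β (k + 1)) (I.α (k + 1)) (g (k + 1)) (f k)
      (hgP (k + 1)) (hfP k) (I.hαβ (k + 1)) v

end Inter2

/-! ### Set intertwinings versus uniform homeomorphisms -/

section Final

variable {T U : Set (List ℕ)} {hT : IsPrunedTree T} {hU : IsPrunedTree U}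

/-- The symmetric set intertwining. -/
def SetInter.symm (SI : SetInter T U hT hU) : SetInter U T hU hT where
  s := fun k => SI.t (k + 1)
  t := fun k => SI.s k
  hs := fun k => SI.ht (k + 1)
  ht := fun k => SI.hs k
  hsk := fun k => (Nat.le_succ k).trans (SI.htk (k + 1))
  htk := fun k => SI.hsk k
  f := fun k => SI.g k
  g := fun k => SI.f (k + 1)
  hgf := fun k => SI.hfg (k + 1)
  hfg := fun k => SI.hgf k

lemma SetInter.phi_exists (SI : SetInter T U hT hU) (x : pathSpace T) :
    ∃ y : pathSpace U, ∀ k, resNode y (SI.t k) = SI.f k (resNode x (SI.s k)) := by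
  set c : ℕ → List ℕ := fun k => (SI.f k (resNode x (SI.s k))).1 with hc
  have hmem : ∀ k, c k ∈ U := fun k => (SI.f k (resNode x (SI.s k))).2.1
  have hlen : ∀ k, (c k).length = SI.t k + 1 := fun k => (SI.f k _).2.2
  have hchain : ∀ k, c k <+: c (k + 1) := by
    intro k
    have h3 := congrFun (SI.hgf k) (resNode x (SI.s (k + 1)))
    rw [Function.comp_apply] at h3
    have h1 : takeNode hU (SI.ht k) (SI.f (k + 1) (resNode x (SI.s (k + 1))))
        = SI.f k (resNode x (SI.s k)) := by
      have h5 := congrFun (SI.hfg k) (SI.f (k + 1) (resNode x (SI.s (k + 1))))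
      rw [Function.comp_apply] at h5
      rw [← h5, h3, takeNode_resNode]
    have h4 := congrArg Subtype.val h1
    show (SI.f k (resNode x (SI.s k))).1 <+: (SI.f (k + 1) (resNode x (SI.s (k + 1)))).1
    rw [← h4]
    exact List.take_prefix _ _
  obtain ⟨y, hy⟩ := exists_path hU c hmem
    (fun k => by rw [hlen k]; have := SI.htk k; omega) hchain
  refine ⟨y, fun k => ?_⟩
  apply Subtype.ext
  show res y.1 (SI.t k + 1) = c k
  rw [hy (SI.t k + 1) k (by rw [hlen k])]
  exact List.take_of_length_le (by rw [hlen k])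

/-- The map on path spaces induced by a set intertwining. -/
noncomputable def SetInter.phi (SI : SetInter T U hT hU) (x : pathSpace T) : pathSpace U :=
  (SI.phi_exists x).choose

lemma SetInter.phi_spec (SI : SetInter T U hT hU) (x : pathSpace T) (k : ℕ) :
    resNode (SI.phi x) (SI.t k) = SI.f k (resNode x (SI.s k)) :=
  (SI.phi_exists x).choose_spec k

lemma SetInter.phi_symm_phi (SI : SetInter T U hT hU) (x : pathSpace T) :
    SI.symm.phi (SI.phi x) = x := by
  apply path_ext
  intro n
  refine ⟨SI.s n, SI.hsk n, ?_⟩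
  have h1 : resNode (SI.symm.phi (SI.phi x)) (SI.s n)
      = SI.g n (resNode (SI.phi x) (SI.t (n + 1))) := SI.symm.phi_spec (SI.phi x) n
  rw [h1, SI.phi_spec x (n + 1)]
  have h3 := congrFun (SI.hgf n) (resNode x (SI.s (n + 1)))
  rw [Function.comp_apply] at h3
  rw [h3, takeNode_resNode]

lemma SetInter.phi_phi_symm (SI : SetInter T U hT hU) (y : pathSpace U) :
    SI.phi (SI.symm.phi y) = y := by
  apply path_ext
  intro n
  refine ⟨SI.t n, SI.htk n, ?_⟩
  have h1 : resNode (SI.phi (SI.symm.phi y)) (SI.t n)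
      = SI.f n (resNode (SI.symm.phi y) (SI.s n)) := SI.phi_spec _ n
  have h2 : resNode (SI.symm.phi y) (SI.s n) = SI.g n (resNode y (SI.t (n + 1))) :=
    SI.symm.phi_spec y n
  rw [h1, h2]
  have h3 := congrFun (SI.hfg n) (resNode y (SI.t (n + 1)))
  rw [Function.comp_apply] at h3
  rw [h3, takeNode_resNode]

lemma SetInter.phi_unifCont (SI : SetInter T U hT hU) : IsUnifCont (SI.phi) := by
  intro ε hε
  obtain ⟨n, hn⟩ := exists_small hε
  refine ⟨(2⁻¹ : ℝ) ^ (SI.s n + 1), by positivity, ?_⟩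
  intro x y hxy
  have h1 : res x.1 (SI.s n + 1) = res y.1 (SI.s n + 1) := res_eq_of_lt hxy
  have h2 : resNode x (SI.s n) = resNode y (SI.s n) := Subtype.ext h1
  have h3 : resNode (SI.phi x) (SI.t n) = resNode (SI.phi y) (SI.t n) := by
    rw [SI.phi_spec x n, SI.phi_spec y n, h2]
  have h4 : res (SI.phi x).1 (SI.t n + 1) = res (SI.phi y).1 (SI.t n + 1) :=
    congrArg Subtype.val h3
  refine lt_of_le_of_lt (le_trans (seqDist_le h4) ?_) hn
  exact pow_le_pow_of_le_one (by norm_num) (by norm_num) (by have := SI.htk n; omega)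

/-- A set intertwining induces a uniform homeomorphism of the path spaces. -/
lemma set_to_unif (SI : SetInter T U hT hU) : UnifHomeo T U := by
  refine ⟨⟨SI.phi, SI.symm.phi, SI.phi_symm_phi, SI.phi_phi_symm⟩,
    SI.phi_unifCont, SI.symm.phi_unifCont⟩

/-- Uniform continuity gives a modulus on levels. -/
lemma modulus {Φ' : pathSpace T → pathSpace U} (hΦ : IsUnifCont Φ') (n : ℕ) :
    ∃ m, ∀ x y : pathSpace T,
      resNode x m = resNode y m → resNode (Φ' x) n = resNode (Φ' y) n := by
  obtain ⟨δ, hδ, hmod⟩ := hΦ ((2⁻¹ : ℝ) ^ (n + 1)) (by positivity)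
  obtain ⟨m, hm⟩ := exists_small hδ
  refine ⟨m, fun x y hxy => ?_⟩
  have h1 : res x.1 (m + 1) = res y.1 (m + 1) := congrArg Subtype.val hxy
  have h2 : seqDist x.1 y.1 < δ :=
    lt_of_le_of_lt (le_trans (seqDist_le h1)
      (pow_le_pow_of_le_one (by norm_num) (by norm_num) (Nat.le_succ m))) hm
  exact Subtype.ext (res_eq_of_lt (hmod x y h2))

/-- A uniform homeomorphism of path spaces induces a set intertwining. -/
lemma unif_to_set (hT : IsPrunedTree T) (hU : IsPrunedTree U) (h : UnifHomeo T U) :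
    Nonempty (SetInter T U hT hU) := by
  obtain ⟨Φ, hΦ, hΨ⟩ := h
  choose F hF using fun n => modulus hΦ n
  choose G hG using fun n => modulus hΨ n
  have hF' : ∀ n m', F n ≤ m' → ∀ x y : pathSpace T, resNode x m' = resNode y m' →
      resNode (Φ x) n = resNode (Φ y) n := by
    intro n m' hm' x y hxy
    apply hF n x y
    rw [← takeNode_resNode hT hm' x, ← takeNode_resNode hT hm' y, hxy]
  have hG' : ∀ n m', G n ≤ m' → ∀ x y : pathSpace U, resNode x m' = resNode y m' →
      resNode (Φ.symm x) n = resNode (Φ.symm y) n := by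
    intro n m' hm' x y hxy
    apply hG n x y
    rw [← takeNode_resNode hU hm' x, ← takeNode_resNode hU hm' y, hxy]
  let P : ℕ → ℕ × ℕ := fun k => Nat.rec (F 0, 0)
    (fun _ q => (max (q.1 + 1) (F (max (q.2 + 1) (G q.1))), max (q.2 + 1) (G q.1))) k
  let s : ℕ → ℕ := fun k => (P k).1
  let t : ℕ → ℕ := fun k => (P k).2
  have hPsucc : ∀ k, P (k + 1) = (max ((P k).1 + 1) (F (max ((P k).2 + 1) (G (P k).1))),
      max ((P k).2 + 1) (G (P k).1)) := fun k => rfl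
  have hs' : ∀ k, s k + 1 ≤ s (k + 1) := by
    intro k
    show s k + 1 ≤ (P (k + 1)).1
    rw [hPsucc k]
    exact le_max_left _ _
  have ht' : ∀ k, t k + 1 ≤ t (k + 1) := by
    intro k
    show t k + 1 ≤ (P (k + 1)).2
    rw [hPsucc k]
    exact le_max_left _ _
  have hFs : ∀ k, F (t k) ≤ s k := by
    intro k
    cases k with
    | zero => exact le_rfl
    | succ k =>
      show F ((P (k + 1)).2) ≤ (P (k + 1)).1
      rw [hPsucc k]
      exact le_max_right _ _
  have hGt : ∀ k, G (s k) ≤ t (k + 1) := by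
    intro k
    show G ((P k).1) ≤ (P (k + 1)).2
    rw [hPsucc k]
    exact le_max_right _ _
  have hsk : ∀ k, k ≤ s k := by
    intro k
    induction k with
    | zero => exact Nat.zero_le _
    | succ k ih => have := hs' k; omega
  have htk : ∀ k, k ≤ t k := by
    intro k
    induction k with
    | zero => exact Nat.zero_le _
    | succ k ih => have := ht' k; omega
  refine ⟨{
    s := s, t := t,
    hs := fun k => (Nat.le_succ (s k)).trans (hs' k),
    ht := fun k => (Nat.le_succ (t k)).trans (ht' k),
    hsk := hsk, htk := htk,
    f := fun k nd => resNode (Φ (nodePath hT nd)) (t k),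
    g := fun k nd => resNode (Φ.symm (nodePath hU nd)) (s k),
    hgf := ?_, hfg := ?_ }⟩
  · intro k
    funext nd
    show resNode (Φ.symm (nodePath hU (resNode (Φ (nodePath hT nd)) (t (k + 1))))) (s k)
      = takeNode hT ((Nat.le_succ (s k)).trans (hs' k)) nd
    have h1 : resNode (Φ.symm (nodePath hU (resNode (Φ (nodePath hT nd)) (t (k + 1))))) (s k)
        = resNode (Φ.symm (Φ (nodePath hT nd))) (s k) := by
      apply hG' (s k) (t (k + 1)) (hGt k)
      rw [nodePath_spec]
    rw [h1, Equiv.symm_apply_apply, ← takeNode_resNode hT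
      ((Nat.le_succ (s k)).trans (hs' k)) (nodePath hT nd), nodePath_spec]
  · intro k
    funext nd
    show resNode (Φ (nodePath hT (resNode (Φ.symm (nodePath hU nd)) (s k)))) (t k)
      = takeNode hU ((Nat.le_succ (t k)).trans (ht' k)) nd
    have h1 : resNode (Φ (nodePath hT (resNode (Φ.symm (nodePath hU nd)) (s k)))) (t k)
        = resNode (Φ (Φ.symm (nodePath hU nd))) (t k) := by
      apply hF' (t k) (s k) (hFs k)
      rw [nodePath_spec]
    rw [h1, Equiv.apply_symm_apply, ← takeNode_resNode hU
      ((Nat.le_succ (t k)).trans (ht' k)) (nodePath hU nd), nodePath_spec]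

end Final

end MK

end MK

/-- For pruned trees `T, U` with infinite first level, the path spaces `[T]`
and `[U]` are uniformly homeomorphic iff the procountable groups `G_T` and
`G_U` are topologically isomorphic. -/
theorem unifHomeo_iff_topIso {p : ℕ} (hp : p.Prime) (hodd : Odd p)
    (T U : Set (List ℕ)) (hT : IsPrunedTree T) (hU : IsPrunedTree U)
    (hT1 : (level T 1).Infinite) (hU1 : (level U 1).Infinite) :
    UnifHomeo T U ↔ TopIsoGrp (GT p T hT) (GT p U hU) := by
  haveI : Fact p.Prime := ⟨hp⟩
  constructor
  · intro h
    obtain ⟨SI⟩ := MK.unif_to_set hT hU h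
    exact MK.GpInter.toTopIso (MK.SetInter.toGp (p := p) SI)
  · intro h
    obtain ⟨I⟩ := MK.topiso_to_gp p hT hU h
    obtain ⟨SI⟩ := MK.gp_to_set p hT hU hodd I
    exact MK.set_to_unif SI
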